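/- Let s ≥ 4 and n = 3s - 1. Then the chromatic number of F_n^s equals ⌈(3s-1)/2⌉; in particular, for every integer r with s + 1 ≤ r ≤ s + ⌈(s-3)/2⌉ we have χ(F_n^s) > r and n ≥ 2r + 1. -/

import Mathlib

/-!
Three vertices of the `n`-cycle with pairwise cyclic distances at least `s` would need
`n ≥ 3s`, so for `n = 3s - 1` every independent set of `F_n^s` has at most two vertices and
every colour class of a proper colouring does too; hence `χ ≥ ⌈n/2⌉`. Conversely, colouring
`x` and `x + ⌈n/2⌉` alike is proper, because their cyclic distance is `⌊n/2⌋ ≥ s`.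
-/

/-- Cyclic distance `min (|x-y|, n - |x-y|)` on `ℤ/nℤ` for `x, y ∈ {1,…,n}`. -/
def cdist (n x y : ℕ) : ℕ := min (max x y - min x y) (n - (max x y - min x y))

/-- The graph `F_n^s` on vertex set `[n] = {1,…,n}`: distinct `x, y` are adjacent
iff their cyclic distance is `< s`. -/
def Fgraph (n s : ℕ) : SimpleGraph ℕ :=
  SimpleGraph.fromRel (fun x y => x ∈ Finset.Icc 1 n ∧ y ∈ Finset.Icc 1 n ∧ cdist n x y < s)

open Finset

namespace SimpleGraph

variable {V : Type*} {G : SimpleGraph V}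

theorem Colorable.card_le_mul_of_isIndepSet_card_le {k a : ℕ} (hG : G.Colorable k) {S : Finset V}
    (hS : ∀ t ⊆ S, G.IsIndepSet (t : Set V) → #t ≤ a) : #S ≤ a * k := by
  classical
  obtain ⟨C⟩ := hG
  have hfiber : ∀ c ∈ (univ : Finset (Fin k)), #{v ∈ S | C v = c} ≤ a := fun c _ =>
    hS _ (filter_subset _ _) ((C.isIndepSet_colorClass c).mono fun v hv => (mem_filter.1 hv).2)
  simpa using card_le_mul_card_image_of_maps_to (fun v _ => mem_univ (C v)) a hfiber

end SimpleGraph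

lemma cdist_comm (n x y : ℕ) : cdist n x y = cdist n y x := by
  simp only [cdist, max_comm, min_comm]

lemma Fgraph_adj {n s x y : ℕ} :
    (Fgraph n s).Adj x y ↔ x ≠ y ∧ x ∈ Icc 1 n ∧ y ∈ Icc 1 n ∧ cdist n x y < s := by
  simp only [Fgraph, SimpleGraph.fromRel_adj, cdist_comm n y x]
  tauto

lemma Fgraph_colorable {s : ℕ} (hs : 0 < s) :
    (Fgraph (3 * s - 1) s).Colorable ((3 * s - 1 + 1) / 2) := by
  set n := 3 * s - 1
  set m := (3 * s - 1 + 1) / 2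
  refine ⟨SimpleGraph.Coloring.mk
    (fun x => ⟨if x ≤ m then x - 1 else if x ≤ n then x - 1 - m else 0, by split_ifs <;> omega⟩)
    fun {x y} hadj => ?_⟩
  obtain ⟨hne, hx, hy, hd⟩ := Fgraph_adj.1 hadj
  simp only [mem_Icc] at hx hy
  simp only [ne_eq, Fin.mk.injEq]
  simp only [cdist, Nat.min_def, Nat.max_def] at hd
  split_ifs at hd ⊢ <;> omega

lemma Fgraph_adj_of_three {s x y z : ℕ} (hx : x ∈ Icc 1 (3 * s - 1))
    (hy : y ∈ Icc 1 (3 * s - 1)) (hz : z ∈ Icc 1 (3 * s - 1))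
    (hxy : x ≠ y) (hxz : x ≠ z) (hyz : y ≠ z) :
    (Fgraph (3 * s - 1) s).Adj x y ∨ (Fgraph (3 * s - 1) s).Adj x z ∨
      (Fgraph (3 * s - 1) s).Adj y z := by
  simp only [Fgraph_adj, cdist, Nat.min_def, Nat.max_def, mem_Icc] at hx hy hz ⊢
  split_ifs <;> omega

lemma Fgraph_isIndepSet_card_le_two {s : ℕ} {t : Finset ℕ} (ht : t ⊆ Icc 1 (3 * s - 1))
    (hind : (Fgraph (3 * s - 1) s).IsIndepSet (t : Set ℕ)) : #t ≤ 2 := by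
  by_contra! h
  obtain ⟨x, hx, y, hy, z, hz, hxy, hxz, hyz⟩ := two_lt_card.1 h
  rcases Fgraph_adj_of_three (ht hx) (ht hy) (ht hz) hxy hxz hyz with hadj | hadj | hadj
  · exact hind hx hy hxy hadj
  · exact hind hx hz hxz hadj
  · exact hind hy hz hyz hadj

/-- For `s ≥ 4` and `n = 3s - 1`, `χ(F_n^s) = ⌈(3s-1)/2⌉`; in particular for
every `r` with `s + 1 ≤ r ≤ s + ⌈(s-3)/2⌉` we have `χ(F_n^s) > r` and
`n ≥ 2r + 1`. -/
theorem stmt_9 (s : ℕ) (hs : 4 ≤ s) :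
    (Fgraph (3 * s - 1) s).chromaticNumber = (((3 * s - 1 + 1) / 2 : ℕ) : ℕ∞) ∧
    ∀ r : ℕ, s + 1 ≤ r → r ≤ s + (s - 3 + 1) / 2 →
      ((r : ℕ∞) < (Fgraph (3 * s - 1) s).chromaticNumber ∧ 2 * r + 1 ≤ 3 * s - 1) := by
  have hlower : ∀ k, (Fgraph (3 * s - 1) s).Colorable k → (3 * s - 1 + 1) / 2 ≤ k := by
    intro k hk
    have := hk.card_le_mul_of_isIndepSet_card_le fun _ => Fgraph_isIndepSet_card_le_two
    rw [Nat.card_Icc] at this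
    omega
  have hchi : (Fgraph (3 * s - 1) s).chromaticNumber = (((3 * s - 1 + 1) / 2 : ℕ) : ℕ∞) :=
    le_antisymm (Fgraph_colorable (by omega)).chromaticNumber_le
      (SimpleGraph.le_chromaticNumber_iff_colorable.2 fun k hk => by exact_mod_cast hlower k hk)
  refine ⟨hchi, fun r hr₁ hr₂ => ⟨?_, by omega⟩⟩
  rw [hchi]
  exact_mod_cast (by omega : r < (3 * s - 1 + 1) / 2)
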